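/- Let {R₁,R₂} = {B₁,B₂}{R^{-1},0}{B₁,B₂}^H. For every k ≥ 0 the iterate {P₁(k),P₂(k)} of the Riccati iteration started at {P₁(0),P₂(0)} = {Q,0} is a positive definite (hence invertible) bimatrix, the bimatrix {P₁(k),P₂(k)}^{-1} + {R₁,R₂} is positive definite (hence invertible), and the iteration can be equivalently written as {P₁(k+1),P₂(k+1)} = {Q,0} + {A₁,A₂}^H ({P₁(k),P₂(k)}^{-1} + {R₁,R₂})^{-1} {A₁,A₂}. -/

import Mathlib

open Matrix Filter Topology
open scoped ENNReal ComplexOrder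

noncomputable section

/-- Entrywise complex conjugate of a matrix, `M^#`. -/
def mconj {k l : Type*} (A : Matrix k l ℂ) : Matrix k l ℂ := A.map (starRingEnd ℂ)

/-- A bimatrix `{A₁, A₂}` of `k × l` complex matrices. -/
structure Bimatrix (k l : ℕ) where
  fst : Matrix (Fin k) (Fin l) ℂ
  snd : Matrix (Fin k) (Fin l) ℂ

namespace Bimatrix

variable {k l p : ℕ}

/-- The action of a bimatrix on a vector: `{A₁,A₂}x = A₁x + A₂^# x^#`. -/
def apply (A : Bimatrix k l) (x : Fin l → ℂ) : Fin k → ℂ :=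
  A.fst *ᵥ x + mconj A.snd *ᵥ star x

/-- Bimatrix product `{A₁,A₂}{B₁,B₂} = {A₁B₁ + A₂^#B₂, A₁^#B₂ + A₂B₁}`. -/
def mul (A : Bimatrix k l) (B : Bimatrix l p) : Bimatrix k p :=
  ⟨A.fst * B.fst + mconj A.snd * B.snd, mconj A.fst * B.snd + A.snd * B.fst⟩

/-- Bimatrix conjugate transpose `{A₁,A₂}^H = {A₁^H, A₂^T}`. -/
def conjT (A : Bimatrix k l) : Bimatrix l k :=
  ⟨A.fst.conjTranspose, A.snd.transpose⟩

def add (A B : Bimatrix k l) : Bimatrix k l := ⟨A.fst + B.fst, A.snd + B.snd⟩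

def sub (A B : Bimatrix k l) : Bimatrix k l := ⟨A.fst - B.fst, A.snd - B.snd⟩

def neg (A : Bimatrix k l) : Bimatrix k l := ⟨-A.fst, -A.snd⟩

/-- The identity bimatrix `{I, 0}`. -/
def one (k : ℕ) : Bimatrix k k := ⟨1, 0⟩

/-- A bimatrix is Hermitian if `P₁^H = P₁` and `P₂^T = P₂`. -/
def IsHermitian (P : Bimatrix k k) : Prop :=
  P.fst.conjTranspose = P.fst ∧ P.snd.transpose = P.snd

/-- The real quadratic form `Re (x^H P₁ x + x^H P₂^# x^#)` of a bimatrix. -/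
def quadForm (P : Bimatrix k k) (x : Fin k → ℂ) : ℝ :=
  (star x ⬝ᵥ P.apply x).re

/-- Positive semidefinite bimatrix. -/
def PosSemidef (P : Bimatrix k k) : Prop :=
  P.IsHermitian ∧ ∀ x : Fin k → ℂ, 0 ≤ P.quadForm x

/-- Positive definite bimatrix. -/
def PosDef (P : Bimatrix k k) : Prop :=
  P.IsHermitian ∧ (∀ x : Fin k → ℂ, 0 ≤ P.quadForm x) ∧
    ∀ x : Fin k → ℂ, x ≠ 0 → 0 < P.quadForm x

/-- The Loewner-type order on bimatrices: `X ≤ Y` iff `Y - X ≥ 0`. -/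
def le (X Y : Bimatrix k k) : Prop := PosSemidef (Y.sub X)

/-- `T` is the (two-sided) inverse of the bimatrix `S`. -/
def IsInv (S T : Bimatrix k k) : Prop := S.mul T = one k ∧ T.mul S = one k

/-- The complex-matrix representation of a bimatrix. -/
def toMat (S : Bimatrix k k) : Matrix (Fin k ⊕ Fin k) (Fin k ⊕ Fin k) ℂ :=
  fromBlocks S.fst (mconj S.snd) S.snd (mconj S.fst)

/-- The inverse of a bimatrix, extracted from the inverse of its complex-matrix
representation.  When `S` is invertible as a bimatrix, `S.inv` is its genuine inverse. -/
def inv (S : Bimatrix k k) : Bimatrix k k :=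
  ⟨(toMat S)⁻¹.toBlocks₁₁, (toMat S)⁻¹.toBlocks₂₁⟩

end Bimatrix

variable {n m : ℕ}

/-- The complex-valued linear system `x(k+1) = {A₁,A₂}x(k) + {B₁,B₂}u(k)` is
stabilizable if some full state feedback `u(k) = K₁x(k) + K₂^#x^#(k)` drives every
closed-loop solution to zero. -/
def Stabilizable (A : Bimatrix n n) (B : Bimatrix n m) : Prop :=
  ∃ K : Bimatrix m n, ∀ x : ℕ → (Fin n → ℂ),
    (∀ k : ℕ, x (k + 1) = A.apply (x k) + B.apply (K.apply (x k))) →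
    Tendsto x atTop (𝓝 0)

/-- `{S₁,S₂} = {R,0} + {B₁,B₂}^H {P₁,P₂} {B₁,B₂}`. -/
def Smat (B : Bimatrix n m) (R : Matrix (Fin m) (Fin m) ℂ) (P : Bimatrix n n) :
    Bimatrix m m :=
  (Bimatrix.mk R 0).add (B.conjT.mul (P.mul B))

/-- The bimatrix Riccati equation
`-{Q,0} = {A}^H{P}{A} - {P} - {A}^H{P}{B}{S}⁻¹{B}^H{P}{A}`, where
`{S} = {R,0} + {B}^H{P}{B}` is required to be invertible. -/
def RiccatiEq (A : Bimatrix n n) (B : Bimatrix n m)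
    (Q : Matrix (Fin n) (Fin n) ℂ) (R : Matrix (Fin m) (Fin m) ℂ)
    (P : Bimatrix n n) : Prop :=
  ∃ T : Bimatrix m m, (Smat B R P).IsInv T ∧
    (Bimatrix.mk Q 0).neg =
      ((A.conjT.mul (P.mul A)).sub P).sub
        (A.conjT.mul (P.mul (B.mul (T.mul (B.conjT.mul (P.mul A))))))

/-- The Riccati iteration `{P(0)} = {Q,0}`,
`{P(k+1)} = {Q,0} + {A}^H{P(k)}{A} - {A}^H{P(k)}{B}{S(k)}⁻¹{B}^H{P(k)}{A}`, where
`{S(k)} = {R,0} + {B}^H{P(k)}{B}`. -/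
def riccatiIter (A : Bimatrix n n) (B : Bimatrix n m)
    (Q : Matrix (Fin n) (Fin n) ℂ) (R : Matrix (Fin m) (Fin m) ℂ) : ℕ → Bimatrix n n
  | 0 => ⟨Q, 0⟩
  | k + 1 =>
    let P := riccatiIter A B Q R k
    ((Bimatrix.mk Q 0).add (A.conjT.mul (P.mul A))).sub
      (A.conjT.mul (P.mul (B.mul ((Smat B R P).inv.mul (B.conjT.mul (P.mul A))))))

/-! The augmented matrix `aug {A₁,A₂} = [[A₁, A₂^#], [A₂, A₁^#]]` is the matrix of the action
`x ↦ {A₁,A₂}x` on augmented vectors `(x, x^#)`. It is injective and turns sums, products,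
conjugate transposes and inverses of bimatrices into those of complex matrices, and
`quadForm P x` is half the quadratic form of `aug P` at `(x, x^#)`. So one may run the iteration
on augmented matrices, with `aug P(k) > 0` as invariant. There the inverse form is the Woodbury
identity, and `aug P(k) > 0` gives `(aug P(k))⁻¹ + aug {R₁,R₂} > 0`, hence
`aug P(k+1) = aug {Q,0} + (aug A)ᴴ ((aug P(k))⁻¹ + aug {R₁,R₂})⁻¹ aug A > 0`. -/

lemma mconj_mconj {k l : Type*} (A : Matrix k l ℂ) : mconj (mconj A) = A := by
  ext i j; simp [mconj]

lemma mconj_add {k l : Type*} (A B : Matrix k l ℂ) : mconj (A + B) = mconj A + mconj B := by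
  ext i j; simp [mconj]

lemma mconj_mul {k l p : Type*} [Fintype l] (A : Matrix k l ℂ) (B : Matrix l p ℂ) :
    mconj (A * B) = mconj A * mconj B :=
  Matrix.map_mul

lemma mconj_zero {k l : Type*} : mconj (0 : Matrix k l ℂ) = 0 := by
  ext i j; simp [mconj]

lemma mconj_one {k : Type*} [DecidableEq k] : mconj (1 : Matrix k k ℂ) = 1 := by
  ext i j; simp [mconj, Matrix.one_apply, apply_ite]

lemma mconj_eq_conjTranspose_transpose {k l : Type*} (A : Matrix k l ℂ) : mconj A = Aᴴᵀ := rfl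

lemma star_mulVec_eq_mconj_mulVec {k l : Type*} [Fintype l] (M : Matrix k l ℂ) (v : l → ℂ) :
    star (M *ᵥ v) = mconj M *ᵥ star v := by
  ext i; exact RingHom.map_mulVec (starRingEnd ℂ) M v i

lemma Matrix.PosDef.mconj {k : Type*} [Fintype k] {Q : Matrix k k ℂ} (hQ : Q.PosDef) :
    (mconj Q).PosDef := by
  rw [mconj_eq_conjTranspose_transpose, hQ.isHermitian.eq]
  exact hQ.transpose

/-- The Woodbury identity `add_mul_mul_inv_eq_sub` with `M⁻¹`, `C⁻¹` in place of `A`, `C`. -/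
lemma Matrix.inv_add_mul_inv_mul_eq_sub {α ι κ : Type*} [Fintype ι] [DecidableEq ι]
    [Fintype κ] [DecidableEq κ] [CommRing α] {M : Matrix ι ι α} {C : Matrix κ κ α}
    (U : Matrix ι κ α) (V : Matrix κ ι α) (hM : IsUnit M) (hC : IsUnit C)
    (hCM : IsUnit (C + V * M * U)) :
    (M⁻¹ + U * C⁻¹ * V)⁻¹ = M - M * U * (C + V * M * U)⁻¹ * V * M := by
  have hMdet := (isUnit_iff_isUnit_det M).mp hM
  have hCdet := (isUnit_iff_isUnit_det C).mp hC
  have := add_mul_mul_inv_eq_sub M⁻¹ U C⁻¹ V (isUnit_nonsing_inv_iff.mpr hM)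
    (isUnit_nonsing_inv_iff.mpr hC)
    (by rwa [nonsing_inv_nonsing_inv _ hMdet, nonsing_inv_nonsing_inv _ hCdet])
  rwa [nonsing_inv_nonsing_inv _ hMdet, nonsing_inv_nonsing_inv _ hCdet] at this

/-- The antilinear involution `M ↦ J M^# J` with `J = [[0, 1], [1, 0]]`; its fixed points are
the augmented matrices. -/
def swapConj {ι : Type*} (M : Matrix (ι ⊕ ι) (ι ⊕ ι) ℂ) : Matrix (ι ⊕ ι) (ι ⊕ ι) ℂ :=
  (mconj M).submatrix Sum.swap Sum.swap

lemma swapConj_inv {ι : Type*} [Fintype ι] [DecidableEq ι] (M : Matrix (ι ⊕ ι) (ι ⊕ ι) ℂ) :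
    swapConj M⁻¹ = (swapConj M)⁻¹ := by
  have := inv_submatrix_equiv (mconj M) (Equiv.sumComm ι ι) (Equiv.sumComm ι ι)
  simp only [Equiv.sumComm_apply] at this
  rw [swapConj, swapConj, this, mconj_eq_conjTranspose_transpose,
    mconj_eq_conjTranspose_transpose, conjTranspose_nonsing_inv, transpose_nonsing_inv]

namespace Bimatrix

variable {k l p : ℕ}

lemma ext' {A B : Bimatrix k l} (h₁ : A.fst = B.fst) (h₂ : A.snd = B.snd) : A = B := by
  cases A; cases B; simp_all

def aug (A : Bimatrix k l) : Matrix (Fin k ⊕ Fin k) (Fin l ⊕ Fin l) ℂ :=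
  fromBlocks A.fst (mconj A.snd) A.snd (mconj A.fst)

lemma aug_injective : Function.Injective (aug : Bimatrix k l → _) := fun A B h =>
  ext' (by simpa [aug] using congrArg toBlocks₁₁ h) (by simpa [aug] using congrArg toBlocks₂₁ h)

lemma aug_add (A B : Bimatrix k l) : aug (A.add B) = aug A + aug B := by
  simp [aug, add, fromBlocks_add, mconj_add]

lemma aug_sub (A B : Bimatrix k l) : aug (A.sub B) = aug A - aug B := by
  ext (i | i) (j | j) <;> simp [aug, sub, mconj]

lemma aug_mul (A : Bimatrix k l) (B : Bimatrix l p) : aug (A.mul B) = aug A * aug B := by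
  simp only [aug, mul, fromBlocks_multiply, mconj_add, mconj_mul, mconj_mconj]
  congr 1 <;> abel

lemma aug_one : aug (one k) = 1 := by
  simp [aug, one, mconj_one, mconj_zero, ← fromBlocks_one]

lemma aug_conjT (A : Bimatrix k l) : aug A.conjT = (aug A)ᴴ := by
  ext (i | i) (j | j) <;> simp [aug, conjT, mconj, conjTranspose_apply]

lemma aug_mk_zero (Q : Matrix (Fin k) (Fin k) ℂ) : aug ⟨Q, 0⟩ = fromBlocks Q 0 0 (mconj Q) := by
  simp [aug, mconj_zero]

lemma swapConj_aug (A : Bimatrix k k) : swapConj (aug A) = aug A := by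
  ext (i | i) (j | j) <;> simp [swapConj, aug, mconj]

lemma aug_toBlocks_of_swapConj_eq {M : Matrix (Fin k ⊕ Fin k) (Fin k ⊕ Fin k) ℂ}
    (h : swapConj M = M) : aug ⟨M.toBlocks₁₁, M.toBlocks₂₁⟩ = M := by
  ext (i | i) (j | j)
  · rfl
  · simpa [swapConj, aug, mconj, toBlocks₁₁, toBlocks₂₁]
      using congrFun (congrFun h (.inl i)) (.inr j)
  · rfl
  · simpa [swapConj, aug, mconj, toBlocks₁₁, toBlocks₂₁]
      using congrFun (congrFun h (.inr i)) (.inr j)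

lemma aug_inv (S : Bimatrix k k) : aug S.inv = (aug S)⁻¹ :=
  aug_toBlocks_of_swapConj_eq ((swapConj_inv _).trans (congrArg _ (swapConj_aug S)))

lemma isInv_inv {S : Bimatrix k k} (h : IsUnit (aug S)) : S.IsInv S.inv := by
  have hdet := (isUnit_iff_isUnit_det _).mp h
  constructor <;> apply aug_injective
  · rw [aug_mul, aug_inv, aug_one, mul_nonsing_inv _ hdet]
  · rw [aug_mul, aug_inv, aug_one, nonsing_inv_mul _ hdet]

lemma aug_mk_inv {R : Matrix (Fin k) (Fin k) ℂ} (h : IsUnit R) :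
    aug ⟨R⁻¹, 0⟩ = (aug ⟨R, 0⟩)⁻¹ := by
  refine (inv_eq_right_inv ?_).symm
  rw [← aug_mul, ← aug_one]
  congr 1
  apply ext' <;> simp [mul, one, mconj_zero, mul_nonsing_inv _ ((isUnit_iff_isUnit_det R).mp h)]

lemma aug_mk_zero_posDef {Q : Matrix (Fin k) (Fin k) ℂ} (hQ : Q.PosDef) :
    (aug ⟨Q, 0⟩).PosDef := by
  have : Invertible Q := hQ.isUnit.invertible
  have hblocks := PosDef.fromBlocks₁₁ (0 : Matrix (Fin k) (Fin k) ℂ) (mconj Q) hQ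
  simp only [conjTranspose_zero, Matrix.mul_zero, sub_zero] at hblocks
  rw [aug_mk_zero, (hblocks.mpr hQ.mconj.posSemidef).posDef_iff_isUnit, isUnit_fromBlocks_zero₂₁]
  exact ⟨hQ.isUnit, hQ.mconj.isUnit⟩

lemma star_augVec_dotProduct_aug_mulVec (P : Bimatrix k k) (x : Fin k → ℂ) :
    star (Sum.elim x (star x)) ⬝ᵥ (aug P *ᵥ Sum.elim x (star x)) =
      star x ⬝ᵥ P.apply x + star (star x ⬝ᵥ P.apply x) := by
  rw [← star_dotProduct, dotProduct_comm _ x, apply, star_add, star_mulVec_eq_mconj_mulVec,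
    star_mulVec_eq_mconj_mulVec, mconj_mconj, star_star, aug, fromBlocks_mulVec,
    Function.star_sumElim, star_star, Sum.elim_comp_inl, Sum.elim_comp_inr,
    sumElim_dotProduct_sumElim, add_comm (mconj P.fst *ᵥ star x)]

lemma posDef_of_aug {P : Bimatrix k k} (h : (aug P).PosDef) : P.PosDef := by
  have hP : P.conjT = P := aug_injective ((aug_conjT P).trans h.isHermitian)
  have hquad (x : Fin k → ℂ) : 2 * P.quadForm x =
      RCLike.re (star (Sum.elim x (star x)) ⬝ᵥ (aug P *ᵥ Sum.elim x (star x))) := by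
    rw [star_augVec_dotProduct_aug_mulVec, quadForm, RCLike.re_to_complex, Complex.add_re,
      Complex.star_def, Complex.conj_re]
    ring
  have hvec {x : Fin k → ℂ} (hx : x ≠ 0) : Sum.elim x (star x) ≠ 0 :=
    fun h0 => hx (funext fun i => congrFun h0 (.inl i))
  refine ⟨⟨congrArg fst hP, congrArg snd hP⟩, fun x => ?_, fun x hx => ?_⟩
  · linarith [hquad x, h.posSemidef.re_dotProduct_nonneg (Sum.elim x (star x))]
  · linarith [hquad x, h.re_dotProduct_pos (hvec hx)]

end Bimatrix

open Bimatrix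

def riccatiMap (A : Bimatrix n n) (B : Bimatrix n m)
    (Q : Matrix (Fin n) (Fin n) ℂ) (R : Matrix (Fin m) (Fin m) ℂ) (P : Bimatrix n n) :
    Bimatrix n n :=
  ((Bimatrix.mk Q 0).add (A.conjT.mul (P.mul A))).sub
    (A.conjT.mul (P.mul (B.mul ((Smat B R P).inv.mul (B.conjT.mul (P.mul A))))))

lemma riccatiIter_succ (A : Bimatrix n n) (B : Bimatrix n m)
    (Q : Matrix (Fin n) (Fin n) ℂ) (R : Matrix (Fin m) (Fin m) ℂ) (k : ℕ) :
    riccatiIter A B Q R (k + 1) = riccatiMap A B Q R (riccatiIter A B Q R k) :=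
  rfl

section Riccati

variable (A : Bimatrix n n) (B : Bimatrix n m) (Q : Matrix (Fin n) (Fin n) ℂ)
  {R : Matrix (Fin m) (Fin m) ℂ}

lemma aug_Smat (P : Bimatrix n n) :
    aug (Smat B R P) = aug ⟨R, 0⟩ + (aug B)ᴴ * aug P * aug B := by
  rw [Smat, aug_add, aug_mul, aug_mul, aug_conjT, Matrix.mul_assoc]

lemma aug_inv_add_posDef (hR : R.PosDef) {P : Bimatrix n n} (hP : (aug P).PosDef) :
    (aug (P.inv.add (B.mul ((Bimatrix.mk R⁻¹ 0).mul B.conjT)))).PosDef := by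
  rw [aug_add, aug_inv, aug_mul, aug_mul, aug_conjT, aug_mk_inv hR.isUnit, ← Matrix.mul_assoc]
  exact hP.inv.add_posSemidef ((aug_mk_zero_posDef hR).inv.posSemidef.mul_mul_conjTranspose_same _)

lemma riccatiMap_eq_inverse_form (hR : R.PosDef) {P : Bimatrix n n} (hP : (aug P).PosDef) :
    riccatiMap A B Q R P = (Bimatrix.mk Q 0).add
      (A.conjT.mul ((P.inv.add (B.mul ((Bimatrix.mk R⁻¹ 0).mul B.conjT))).inv.mul A)) := by
  have hRaug := aug_mk_zero_posDef hR
  have hS : (aug ⟨R, 0⟩ + (aug B)ᴴ * aug P * aug B).PosDef :=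
    hRaug.add_posSemidef (hP.posSemidef.conjTranspose_mul_mul_same _)
  apply aug_injective
  simp only [riccatiMap, aug_sub, aug_add, aug_mul, aug_conjT, aug_inv, aug_Smat]
  rw [aug_mk_inv hR.isUnit, ← Matrix.mul_assoc (aug B) (aug ⟨R, 0⟩)⁻¹,
    inv_add_mul_inv_mul_eq_sub _ _ hP.isUnit hRaug.isUnit hS.isUnit]
  simp only [Matrix.mul_sub, Matrix.sub_mul, Matrix.mul_assoc]
  abel

lemma aug_inverse_form_posDef (hQ : Q.PosDef) {N : Bimatrix n n} (hN : (aug N).PosDef) :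
    (aug ((Bimatrix.mk Q 0).add (A.conjT.mul (N.inv.mul A)))).PosDef := by
  rw [aug_add, aug_mul, aug_mul, aug_conjT, aug_inv, ← Matrix.mul_assoc]
  exact (aug_mk_zero_posDef hQ).add_posSemidef (hN.inv.posSemidef.conjTranspose_mul_mul_same _)

lemma aug_riccatiIter_posDef (hQ : Q.PosDef) (hR : R.PosDef) (k : ℕ) :
    (aug (riccatiIter A B Q R k)).PosDef := by
  induction k with
  | zero => exact aug_mk_zero_posDef hQ
  | succ k ih =>
    rw [riccatiIter_succ, riccatiMap_eq_inverse_form A B Q hR ih]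
    exact aug_inverse_form_posDef A Q hQ (aug_inv_add_posDef B hR ih)

end Riccati

/-- With `{R₁,R₂} = {B₁,B₂}{R⁻¹,0}{B₁,B₂}^H`, every iterate of the
Riccati iteration started at `{Q,0}` is a positive definite (hence invertible) bimatrix,
`{P(k)}⁻¹ + {R₁,R₂}` is positive definite (hence invertible), and the iteration can be
rewritten as `{P(k+1)} = {Q,0} + {A}^H ({P(k)}⁻¹ + {R₁,R₂})⁻¹ {A}`. -/
theorem riccatiIter_inverse_form
    (A : Bimatrix n n) (B : Bimatrix n m)
    (Q : Matrix (Fin n) (Fin n) ℂ) (R : Matrix (Fin m) (Fin m) ℂ)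
    (hQ : Q.PosDef) (hR : R.PosDef)
    (Rb : Bimatrix n n) (hRb : Rb = B.mul ((Bimatrix.mk R⁻¹ 0).mul B.conjT)) :
    ∀ k : ℕ,
      ((riccatiIter A B Q R k).PosDef ∧
        (riccatiIter A B Q R k).IsInv (riccatiIter A B Q R k).inv) ∧
      (((riccatiIter A B Q R k).inv.add Rb).PosDef ∧
        ((riccatiIter A B Q R k).inv.add Rb).IsInv ((riccatiIter A B Q R k).inv.add Rb).inv) ∧
      riccatiIter A B Q R (k + 1) =
        (Bimatrix.mk Q 0).add
          (A.conjT.mul ((((riccatiIter A B Q R k).inv.add Rb).inv).mul A)) := by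
  subst hRb
  intro k
  have hP := aug_riccatiIter_posDef A B Q hQ hR k
  have hN := aug_inv_add_posDef B hR hP
  refine ⟨⟨posDef_of_aug hP, isInv_inv hP.isUnit⟩, ⟨posDef_of_aug hN, isInv_inv hN.isUnit⟩, ?_⟩
  rw [riccatiIter_succ, riccatiMap_eq_inverse_form A B Q hR hP]
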